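/- Explicit value of the radial derivative integral in dimension 3: for α ∈ (0, 2) and any x ∈ S² ⊂ ℝ³, the integral I^{3,α} := ∫_{B₁} ⟨x − y, x⟩ / |x − y|^{α+2} dy equals 2π · 2^{2−α} / ((4−α)(2−α)). -/

import Mathlib

/-!
After rotating `x` to `e₀`, write `y = (t, z)` with `t ∈ (-1, 1)` and `z` in the disc of radius
`√(1 - t²)`. With `c = 1 - t` the integrand is `c (c² + |z|²)^(-(α+2)/2)`, whose integral over the
disc is elementary in polar coordinates because `c² + (1 - t²) = 2c`; it equals
`2π/α · (c^(1-α) - 2^(-α/2) c^(1-α/2))`. Integrating these powers of `1 - t` over `(-1, 1)` gives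
the value. All integrands are nonnegative, so Fubini only needs the slices and the profile to be
integrable.
-/

open MeasureTheory Metric
open scoped RealInnerProductSpace
open Set Real

theorem integral_ball_inner_sub_div_rpow_eq_of_norm_eq {E : Type*} [NormedAddCommGroup E]
    [InnerProductSpace ℝ E] [FiniteDimensional ℝ E] [MeasurableSpace E] [BorelSpace E]
    (q r : ℝ) {x x₀ : E} (h : ‖x₀‖ = ‖x‖) :
    ∫ y in ball 0 r, ⟪x - y, x⟫ / ‖x - y‖ ^ q = ∫ y in ball 0 r, ⟪x₀ - y, x₀⟫ / ‖x₀ - y‖ ^ q := by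
  set e : E ≃ₗᵢ[ℝ] E := (ℝ ∙ (x₀ - x))ᗮ.reflection
  have hex : e x₀ = x := Submodule.reflection_sub h
  have hball : e ⁻¹' ball 0 r = ball 0 r := by simp
  rw [← e.measurePreserving.setIntegral_preimage_emb e.toHomeomorph.measurableEmbedding, hball]
  refine setIntegral_congr_fun measurableSet_ball fun y _ => ?_
  rw [← hex, ← map_sub, e.norm_map, e.inner_map_map]

def EuclideanSpace.finThreeEquivProd : EuclideanSpace ℝ (Fin 3) ≃ᵐ ℝ × ℝ × ℝ :=
  (MeasurableEquiv.toLp 2 (Fin 3 → ℝ)).symm.trans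
    ((MeasurableEquiv.piFinSuccAbove (fun _ => ℝ) 0).trans
      (MeasurableEquiv.prodCongr (MeasurableEquiv.refl ℝ) MeasurableEquiv.finTwoArrow))

theorem EuclideanSpace.finThreeEquivProd_apply (y : EuclideanSpace ℝ (Fin 3)) :
    finThreeEquivProd y = (y 0, y 1, y 2) := rfl

theorem EuclideanSpace.measurePreserving_finThreeEquivProd :
    MeasurePreserving finThreeEquivProd :=
  (((MeasurePreserving.id volume).prod (volume_preserving_finTwoArrow ℝ)).comp
    (volume_preserving_piFinSuccAbove (fun _ => ℝ) 0)).comp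
    (volume_preserving_symm_measurableEquiv_toLp (Fin 3))

theorem EuclideanSpace.norm_sq_fin_three (y : EuclideanSpace ℝ (Fin 3)) :
    ‖y‖ ^ 2 = y 0 ^ 2 + (y 1 ^ 2 + y 2 ^ 2) := by
  simp [EuclideanSpace.norm_sq_eq, Fin.sum_univ_three, add_assoc]

theorem div_rpow_eq_mul_sq_rpow_neg (a : ℝ) {u : ℝ} (hu : 0 ≤ u) (q : ℝ) :
    a / u ^ q = a * (u ^ 2) ^ (-(q / 2)) := by
  rw [rpow_neg (by positivity), ← rpow_natCast, ← rpow_mul hu, div_eq_mul_inv]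
  congr 3
  push_cast
  ring

theorem integral_ball_inner_sub_single_div_rpow (q : ℝ) :
    ∫ y in ball (0 : EuclideanSpace ℝ (Fin 3)) 1,
        ⟪EuclideanSpace.single 0 1 - y, EuclideanSpace.single 0 1⟫ /
          ‖EuclideanSpace.single 0 1 - y‖ ^ q =
      ∫ p in {p : ℝ × ℝ × ℝ | p.1 ^ 2 + (p.2.1 ^ 2 + p.2.2 ^ 2) < 1},
        (1 - p.1) * ((1 - p.1) ^ 2 + (p.2.1 ^ 2 + p.2.2 ^ 2)) ^ (-(q / 2)) := by
  set F := EuclideanSpace.finThreeEquivProd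
  have hball : F ⁻¹' {p : ℝ × ℝ × ℝ | p.1 ^ 2 + (p.2.1 ^ 2 + p.2.2 ^ 2) < 1} = ball 0 1 := by
    ext y
    simp [F, EuclideanSpace.finThreeEquivProd_apply, ← EuclideanSpace.norm_sq_fin_three]
  rw [← EuclideanSpace.measurePreserving_finThreeEquivProd.setIntegral_preimage_emb
    F.measurableEmbedding, hball]
  refine setIntegral_congr_fun measurableSet_ball fun y _ => ?_
  rw [div_rpow_eq_mul_sq_rpow_neg _ (norm_nonneg _), EuclideanSpace.norm_sq_fin_three]
  simp [EuclideanSpace.finThreeEquivProd_apply, EuclideanSpace.inner_single_right]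

theorem setIntegral_prod_of_nonneg {α β : Type*} [MeasurableSpace α] [MeasurableSpace β]
    {μ : Measure α} {ν : Measure β} [SFinite μ] [SFinite ν] {S : Set (α × β)}
    (hS : MeasurableSet S) {g : α × β → ℝ} (hg : Measurable g) (hg₀ : ∀ p ∈ S, 0 ≤ g p)
    (hslice : ∀ t, IntegrableOn (fun z => g (t, z)) (Prod.mk t ⁻¹' S) ν)
    (hint : Integrable (fun t => ∫ z in Prod.mk t ⁻¹' S, g (t, z) ∂ν) μ) :
    ∫ p in S, g p ∂μ.prod ν = ∫ t, ∫ z in Prod.mk t ⁻¹' S, g (t, z) ∂ν ∂μ := by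
  have hsection (t : α) :
      (fun z => S.indicator g (t, z)) = (Prod.mk t ⁻¹' S).indicator fun z => g (t, z) :=
    funext fun _ => (indicator_comp_right (Prod.mk t)).symm
  have hsliceInt (t : α) : ∫ z, S.indicator g (t, z) ∂ν = ∫ z in Prod.mk t ⁻¹' S, g (t, z) ∂ν := by
    rw [hsection, integral_indicator (measurable_prodMk_left hS)]
  have hS_int : Integrable (S.indicator g) (μ.prod ν) := by
    refine (integrable_prod_iff (hg.indicator hS).aestronglyMeasurable).2
      ⟨ae_of_all _ fun t => ?_, ?_⟩
    · rw [hsection]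
      exact (hslice t).integrable_indicator (measurable_prodMk_left hS)
    · simpa only [norm_of_nonneg (indicator_nonneg hg₀ _), hsliceInt] using hint
  rw [← integral_indicator hS, integral_prod _ hS_int]
  simp only [hsliceInt]

theorem integral_mul_add_sq_rpow {b : ℝ} (hb : 0 < b) (R : ℝ) {s : ℝ} (hs : s ≠ -1) :
    ∫ r in (0 : ℝ)..R, r * (b + r ^ 2) ^ s =
      ((b + R ^ 2) ^ (s + 1) - b ^ (s + 1)) / (2 * (s + 1)) := by
  have hpos : ∀ r : ℝ, 0 < b + r ^ 2 := fun r => by positivity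
  have hs' : s + 1 ≠ 0 := by contrapose! hs; linarith
  have hderiv (r : ℝ) : HasDerivAt (fun r => (b + r ^ 2) ^ (s + 1) / (2 * (s + 1)))
      (r * (b + r ^ 2) ^ s) r := by
    have := ((((hasDerivAt_pow 2 r).const_add b).rpow_const (p := s + 1)
      (Or.inl (hpos r).ne')).div_const (2 * (s + 1)))
    refine this.congr_deriv ?_
    rw [add_sub_cancel_right]
    field_simp
    push_cast
    ring
  have hcont : Continuous fun r : ℝ => r * (b + r ^ 2) ^ s :=
    continuous_id.mul ((continuous_const.add (continuous_pow 2)).rpow_const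
      (fun r => Or.inl (hpos r).ne'))
  rw [intervalIntegral.integral_eq_sub_of_hasDerivAt (fun r _ => hderiv r)
    (hcont.intervalIntegrable _ _)]
  norm_num [sub_div]

theorem integral_disc_comp_sq_add_sq (f : ℝ → ℝ) {R : ℝ} (hR : 0 ≤ R) :
    ∫ z in {z : ℝ × ℝ | z.1 ^ 2 + z.2 ^ 2 < R ^ 2}, f (z.1 ^ 2 + z.2 ^ 2) =
      2 * π * ∫ r in (0 : ℝ)..R, r * f (r ^ 2) := by
  set D := {z : ℝ × ℝ | z.1 ^ 2 + z.2 ^ 2 < R ^ 2}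
  set φ := {r : ℝ | r ^ 2 < R ^ 2}.indicator fun r => r * f (r ^ 2) with hφ_def
  have hDisc : MeasurableSet {r : ℝ | r ^ 2 < R ^ 2} :=
    measurableSet_lt (by fun_prop) measurable_const
  have hD : MeasurableSet D := measurableSet_lt (by fun_prop) measurable_const
  have hpolar (p : ℝ × ℝ) :
      p.1 • D.indicator (fun z => f (z.1 ^ 2 + z.2 ^ 2)) (polarCoord.symm p) = φ p.1 * 1 := by
    have hsq : (p.1 * cos p.2) ^ 2 + (p.1 * sin p.2) ^ 2 = p.1 ^ 2 := by
      linear_combination p.1 ^ 2 * sin_sq_add_cos_sq p.2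
    rw [hφ_def]
    by_cases h : p.1 ^ 2 < R ^ 2
    · rw [indicator_of_mem (by simpa [D, hsq] using h), indicator_of_mem (by exact h)]
      simp [hsq]
    · rw [indicator_of_notMem (by simpa [D, hsq] using h), indicator_of_notMem (by exact h)]
      simp
  have hφ : ∫ r in Ioi (0 : ℝ), φ r = ∫ r in (0 : ℝ)..R, r * f (r ^ 2) := by
    have hset : {r : ℝ | r ^ 2 < R ^ 2} ∩ Ioi 0 = Ioo 0 R := by
      ext r
      simp only [mem_inter_iff, mem_ofPred_eq, mem_Ioi, mem_Ioo]
      constructor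
      · rintro ⟨hlt, hpos⟩
        exact ⟨hpos, (pow_lt_pow_iff_left₀ hpos.le hR two_ne_zero).mp hlt⟩
      · rintro ⟨hpos, hlt⟩
        exact ⟨pow_lt_pow_left₀ hlt hpos.le two_ne_zero, hpos⟩
    rw [integral_indicator hDisc, Measure.restrict_restrict hDisc, hset,
      intervalIntegral.integral_of_le hR, integral_Ioc_eq_integral_Ioo]
  calc ∫ z in D, f (z.1 ^ 2 + z.2 ^ 2)
      = ∫ p in polarCoord.target, p.1 • D.indicator (fun z => f (z.1 ^ 2 + z.2 ^ 2))
          (polarCoord.symm p) := by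
        rw [integral_comp_polarCoord_symm, integral_indicator hD]
    _ = ∫ p in Ioi (0 : ℝ) ×ˢ Ioo (-π) π, φ p.1 * (fun _ : ℝ => (1 : ℝ)) p.2 := by
        simp only [polarCoord_target, hpolar]
    _ = (∫ r in Ioi (0 : ℝ), φ r) * ∫ _ in Ioo (-π) π, (1 : ℝ) := by
        rw [Measure.volume_eq_prod, ← Measure.prod_restrict]
        exact integral_prod_mul (μ := volume.restrict (Ioi 0)) φ (fun _ => (1 : ℝ))
    _ = 2 * π * ∫ r in (0 : ℝ)..R, r * f (r ^ 2) := by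
        rw [hφ, setIntegral_const, volume_real_Ioo_of_le (by linarith [pi_pos]), smul_eq_mul]
        ring

theorem Continuous.integrableOn_disc {E : Type*} [NormedAddCommGroup E] {f : ℝ × ℝ → E}
    (hf : Continuous f) (R : ℝ) : IntegrableOn f {z : ℝ × ℝ | z.1 ^ 2 + z.2 ^ 2 < R ^ 2} := by
  refine (hf.continuousOn.integrableOn_compact (isCompact_closedBall 0 |R|)).mono_set
    fun z hz => ?_
  have h₁ : z.1 ^ 2 < R ^ 2 := by nlinarith [sq_nonneg z.2, hz.out]
  have h₂ : z.2 ^ 2 < R ^ 2 := by nlinarith [sq_nonneg z.1, hz.out]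
  rw [mem_closedBall_zero_iff, Prod.norm_def, max_le_iff, norm_eq_abs, norm_eq_abs]
  exact ⟨(sq_lt_sq.1 h₁).le, (sq_lt_sq.1 h₂).le⟩

theorem setOf_sq_add_sq_lt_eq_disc {t : ℝ} (ht : t ∈ Ioo (-1) 1) :
    {z : ℝ × ℝ | t ^ 2 + (z.1 ^ 2 + z.2 ^ 2) < 1} =
      {z : ℝ × ℝ | z.1 ^ 2 + z.2 ^ 2 < √(1 - t ^ 2) ^ 2} := by
  have : t ^ 2 < 1 := by nlinarith [ht.1, ht.2]
  ext z
  simp only [mem_ofPred_eq, sq_sqrt (by linarith : 0 ≤ 1 - t ^ 2)]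
  constructor <;> intro h <;> linarith

theorem setOf_sq_add_sq_lt_eq_empty {t : ℝ} (ht : t ∉ Ioo (-1) 1) :
    {z : ℝ × ℝ | t ^ 2 + (z.1 ^ 2 + z.2 ^ 2) < 1} = ∅ := by
  have : 1 ≤ t ^ 2 := by
    rw [mem_Ioo, not_and_or, not_lt, not_lt] at ht
    rcases ht with h | h <;> nlinarith
  ext z
  simp only [mem_ofPred_eq, mem_empty_iff_false, iff_false, not_lt]
  nlinarith [sq_nonneg z.1, sq_nonneg z.2]

theorem integrableOn_unitBall_slice (α t : ℝ) :
    IntegrableOn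
      (fun z : ℝ × ℝ => (1 - t) * ((1 - t) ^ 2 + (z.1 ^ 2 + z.2 ^ 2)) ^ (-((α + 2) / 2)))
      {z : ℝ × ℝ | t ^ 2 + (z.1 ^ 2 + z.2 ^ 2) < 1} := by
  by_cases ht : t ∈ Ioo (-1) 1
  · have hc : 0 < (1 - t) ^ 2 := by nlinarith [ht.2]
    rw [setOf_sq_add_sq_lt_eq_disc ht]
    refine Continuous.integrableOn_disc (continuous_const.mul ?_) _
    exact (continuous_const.add (by fun_prop)).rpow_const
      fun z => Or.inl (add_pos_of_pos_of_nonneg hc (by positivity)).ne'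
  · rw [setOf_sq_add_sq_lt_eq_empty ht]
    exact integrableOn_empty

theorem integral_unitBall_slice {α : ℝ} (hα : α ≠ 0) (t : ℝ) :
    ∫ z in {z : ℝ × ℝ | t ^ 2 + (z.1 ^ 2 + z.2 ^ 2) < 1},
        (1 - t) * ((1 - t) ^ 2 + (z.1 ^ 2 + z.2 ^ 2)) ^ (-((α + 2) / 2)) =
      (Ioo (-1) 1).indicator
        (fun t => 2 * π / α * ((1 - t) ^ (1 - α) - 2 ^ (-(α / 2)) * (1 - t) ^ (1 - α / 2))) t := by
  by_cases ht : t ∈ Ioo (-1) 1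
  swap
  · rw [setOf_sq_add_sq_lt_eq_empty ht, indicator_of_notMem ht, Measure.restrict_empty,
      integral_zero_measure]
  set c := 1 - t
  have hc : 0 < c := by linarith [ht.2]
  have hR : √(1 - t ^ 2) ^ 2 = 1 - t ^ 2 := sq_sqrt (by nlinarith [ht.1, ht.2])
  have hs : -((α + 2) / 2) + 1 = -(α / 2) := by ring
  rw [setOf_sq_add_sq_lt_eq_disc ht, indicator_of_mem ht,
    integral_disc_comp_sq_add_sq (fun u => c * (c ^ 2 + u) ^ (-((α + 2) / 2))) (sqrt_nonneg _)]
  simp only [mul_left_comm _ c]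
  rw [intervalIntegral.integral_const_mul,
    integral_mul_add_sq_rpow (by positivity) _ (by contrapose! hα; linarith), hR, hs,
    show c ^ 2 + (1 - t ^ 2) = 2 * c by ring, mul_rpow zero_le_two hc.le,
    ← rpow_natCast, ← rpow_mul hc.le]
  have e₁ : c ^ (1 - α) = c * c ^ (-α) := by rw [sub_eq_add_neg, rpow_add hc, rpow_one]
  have e₂ : c ^ (1 - α / 2) = c * c ^ (-(α / 2)) := by
    rw [sub_eq_add_neg, rpow_add hc, rpow_one]
  rw [e₁, e₂, show ((2 : ℕ) : ℝ) * -(α / 2) = -α by push_cast; ring]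
  field_simp
  ring

theorem integral_one_sub_rpow {s : ℝ} (hs : -1 < s) :
    ∫ t in (-1 : ℝ)..1, (1 - t) ^ s = 2 ^ (s + 1) / (s + 1) := by
  rw [intervalIntegral.integral_comp_sub_left (fun u => u ^ s), integral_rpow (Or.inl hs)]
  norm_num [zero_rpow (show s + 1 ≠ 0 by linarith)]

theorem intervalIntegrable_one_sub_rpow {s : ℝ} (hs : -1 < s) :
    IntervalIntegrable (fun t => (1 - t) ^ s) volume (-1) 1 := by
  simpa [show (1 : ℝ) - 2 = -1 by norm_num] using
    ((intervalIntegral.intervalIntegrable_rpow' (a := 0) (b := 2) hs).comp_sub_left 1).symm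

theorem integral_unitBall_slice_profile {α : ℝ} (h0 : 0 < α) (h2 : α < 2) :
    ∫ t in (-1 : ℝ)..1, 2 * π / α * ((1 - t) ^ (1 - α) - 2 ^ (-(α / 2)) * (1 - t) ^ (1 - α / 2)) =
      2 * π * 2 ^ (2 - α) / ((4 - α) * (2 - α)) := by
  have h1 : -1 < 1 - α := by linarith
  have h1' : -1 < 1 - α / 2 := by linarith
  rw [intervalIntegral.integral_const_mul, intervalIntegral.integral_sub
    (intervalIntegrable_one_sub_rpow h1) ((intervalIntegrable_one_sub_rpow h1').const_mul _),
    intervalIntegral.integral_const_mul, integral_one_sub_rpow h1, integral_one_sub_rpow h1',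
    mul_div_assoc', ← rpow_add two_pos]
  have h4 : (4 : ℝ) - α ≠ 0 := by linarith
  have h2' : (2 : ℝ) - α ≠ 0 := by linarith
  rw [show -(α / 2) + (1 - α / 2 + 1) = 2 - α by ring, show 1 - α + 1 = 2 - α by ring,
    show 1 - α / 2 + 1 = (4 - α) / 2 by ring]
  field_simp
  ring

theorem integral_unitBall_prod {α : ℝ} (h0 : 0 < α) (h2 : α < 2) :
    ∫ p in {p : ℝ × ℝ × ℝ | p.1 ^ 2 + (p.2.1 ^ 2 + p.2.2 ^ 2) < 1},
        (1 - p.1) * ((1 - p.1) ^ 2 + (p.2.1 ^ 2 + p.2.2 ^ 2)) ^ (-((α + 2) / 2)) =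
      2 * π * 2 ^ (2 - α) / ((4 - α) * (2 - α)) := by
  have hS : MeasurableSet {p : ℝ × ℝ × ℝ | p.1 ^ 2 + (p.2.1 ^ 2 + p.2.2 ^ 2) < 1} :=
    measurableSet_lt (by fun_prop) measurable_const
  have hnonneg : ∀ p ∈ {p : ℝ × ℝ × ℝ | p.1 ^ 2 + (p.2.1 ^ 2 + p.2.2 ^ 2) < 1},
      0 ≤ (1 - p.1) * ((1 - p.1) ^ 2 + (p.2.1 ^ 2 + p.2.2 ^ 2)) ^ (-((α + 2) / 2)) := by
    intro p hp
    have : p.1 < 1 := by nlinarith [hp.out, sq_nonneg p.2.1, sq_nonneg p.2.2]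
    exact mul_nonneg (by linarith) (rpow_nonneg (by positivity) _)
  have hprofile := ((intervalIntegrable_one_sub_rpow (by linarith : -1 < 1 - α)).sub
    ((intervalIntegrable_one_sub_rpow (by linarith : -1 < 1 - α / 2)).const_mul
      (2 ^ (-(α / 2)) : ℝ))).const_mul (2 * π / α)
  rw [intervalIntegrable_iff_integrableOn_Ioo_of_le (by norm_num)] at hprofile
  rw [Measure.volume_eq_prod, setIntegral_prod_of_nonneg hS (by fun_prop) hnonneg
    (integrableOn_unitBall_slice α)]
  · simp only [preimage_ofPred_eq, integral_unitBall_slice h0.ne']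
    rw [integral_indicator measurableSet_Ioo, ← integral_Ioc_eq_integral_Ioo,
      ← intervalIntegral.integral_of_le (by norm_num), integral_unitBall_slice_profile h0 h2]
  · simp only [preimage_ofPred_eq, integral_unitBall_slice h0.ne']
    exact hprofile.integrable_indicator measurableSet_Ioo

theorem radial_integral_dim3
    (α : ℝ) (h0 : 0 < α) (h2 : α < 2) (x : EuclideanSpace ℝ (Fin 3)) (hx : ‖x‖ = 1) :
    (∫ y in Metric.ball (0 : EuclideanSpace ℝ (Fin 3)) 1, ⟪x - y, x⟫ / ‖x - y‖ ^ (α + 2)) =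
      2 * Real.pi * 2 ^ (2 - α) / ((4 - α) * (2 - α)) := by
  have hx₀ : ‖(EuclideanSpace.single 0 1 : EuclideanSpace ℝ (Fin 3))‖ = ‖x‖ := by
    simp [hx]
  rw [integral_ball_inner_sub_div_rpow_eq_of_norm_eq (α + 2) 1 hx₀,
    integral_ball_inner_sub_single_div_rpow, integral_unitBall_prod h0 h2]
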